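/- Suppose P : ℝⁿ → ℝ can be written as P(x) = Σᵢ₌₁^N (∏ⱼ₌₁^{Mᵢ} 1[p_{i,j}(x) ≥ 0]) · (∏_{l=1}^{Oᵢ} 1[q_{i,l}(x) < 0]) · hᵢ(x), where N is a positive integer or countably infinite, each p_{i,j}, q_{i,l} : ℝⁿ → ℝ is analytic, each hᵢ : ℝⁿ → ℝ is smooth, and the regions Rᵢ = {x | ∀j p_{i,j}(x) ≥ 0, ∀l q_{i,l}(x) < 0} form a partition of ℝⁿ. Then there exists a Borel measurable set A ⊆ ℝⁿ of Lebesgue measure zero such that P is differentiable at every point of ℝⁿ \ A. -/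

import Mathlib

open MeasureTheory
open scoped Classical

/-- The indicator product of region `i` of an analytic partition. -/
noncomputable def regionInd {n : ℕ} {ι : Type} {M O : ι → ℕ}
    (p : (i : ι) → Fin (M i) → (Fin n → ℝ) → ℝ)
    (q : (i : ι) → Fin (O i) → (Fin n → ℝ) → ℝ) (i : ι) (x : Fin n → ℝ) : ℝ :=
  (∏ j, if 0 ≤ p i j x then (1 : ℝ) else 0) *
    ∏ l, if q i l x < 0 then (1 : ℝ) else 0

/-- `P : ℝⁿ → ℝ` is piecewise smooth under analytic partition. -/
def PiecewiseSmooth {n : ℕ} (P : (Fin n → ℝ) → ℝ) : Prop :=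
  ∃ (ι : Type) (_ : Countable ι) (M O : ι → ℕ)
    (p : (i : ι) → Fin (M i) → (Fin n → ℝ) → ℝ)
    (q : (i : ι) → Fin (O i) → (Fin n → ℝ) → ℝ)
    (h : ι → (Fin n → ℝ) → ℝ),
    (∀ i j x, AnalyticAt ℝ (p i j) x) ∧
    (∀ i l x, AnalyticAt ℝ (q i l) x) ∧
    (∀ i, ContDiff ℝ (⊤ : ℕ∞) (h i)) ∧
    (∀ x : Fin n → ℝ, ∃! i : ι, (∀ j, 0 ≤ p i j x) ∧ (∀ l, q i l x < 0)) ∧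
    (∀ x, P x = ∑' i : ι, regionInd p q i x * h i x)

lemma analytic1d_zero_set_null (f : ℝ → ℝ) (hf : ∀ x, AnalyticAt ℝ f x)
    (x0 : ℝ) (hx0 : f x0 ≠ 0) : volume {t : ℝ | f t = 0} = 0 := by
  set S : Set ℝ := {t : ℝ | f t = 0} with hS
  have hdisc : DiscreteTopology S := by
    rw [discreteTopology_subtype_iff]
    intro z hz
    rcases (hf z).eventually_eq_zero_or_eventually_ne_zero with hcase | hcase
    · exfalso
      have : Set.EqOn f 0 Set.univ :=
        AnalyticOnNhd.eqOn_zero_of_preconnected_of_eventuallyEq_zero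
          (fun x _ => hf x) isPreconnected_univ (Set.mem_univ z) hcase
      exact hx0 (this (Set.mem_univ x0))
    · rw [Filter.inf_principal_eq_bot]
      filter_upwards [hcase] with w hw hwS
      exact hw hwS
  have hL : IsLindelof (Set.univ : Set S) := isLindelof_univ
  have hcnt : Countable S := Set.countable_univ_iff.mp hL.countable_of_discrete
  exact Set.Countable.measure_zero (Set.countable_coe_iff.mp hcnt) volume

lemma analytic_cons_left {n : ℕ} (t : ℝ) (f : (Fin (n+1) → ℝ) → ℝ)
    (hf : ∀ x, AnalyticAt ℝ f x) (y : Fin n → ℝ) :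
    AnalyticAt ℝ (fun y' : Fin n → ℝ => f (Fin.cons t y')) y := by
  have hc : AnalyticAt ℝ (fun y' : Fin n → ℝ => (Fin.cons t y' : Fin (n+1) → ℝ)) y := by
    apply AnalyticAt.pi
    intro i
    induction i using Fin.cases with
    | zero => simpa only [Fin.cons_zero] using analyticAt_const
    | succ j =>
      simp only [Fin.cons_succ]
      exact (ContinuousLinearMap.proj (R := ℝ) (φ := fun _ : Fin n => ℝ) j).analyticAt y
  exact (hf _).comp hc

lemma analytic_cons_right {n : ℕ} (y : Fin n → ℝ) (f : (Fin (n+1) → ℝ) → ℝ)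
    (hf : ∀ x, AnalyticAt ℝ f x) (t : ℝ) :
    AnalyticAt ℝ (fun s : ℝ => f (Fin.cons s y)) t := by
  have hc : AnalyticAt ℝ (fun s : ℝ => (Fin.cons s y : Fin (n+1) → ℝ)) t := by
    apply AnalyticAt.pi
    intro i
    induction i using Fin.cases with
    | zero => simp only [Fin.cons_zero]; exact analyticAt_id
    | succ j => simpa only [Fin.cons_succ] using analyticAt_const
  exact (hf _).comp hc

lemma analytic_zero_set_null : ∀ (n : ℕ) (f : (Fin n → ℝ) → ℝ),
    (∀ x, AnalyticAt ℝ f x) → (∃ x, f x ≠ 0) →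
    volume {x : Fin n → ℝ | f x = 0} = 0 := by
  intro n
  induction n with
  | zero =>
    rintro f hf ⟨x0, hx0⟩
    have : {x : Fin 0 → ℝ | f x = 0} = ∅ := by
      ext y
      simp only [Set.mem_setOf_eq, Set.mem_empty_iff_false, iff_false]
      rw [Subsingleton.elim y x0]
      exact hx0
    simp [this]
  | succ n ih =>
    rintro f hf ⟨x0, hx0⟩
    set e := MeasurableEquiv.piFinSuccAbove (fun _ : Fin (n+1) => ℝ) 0 with he_def
    have he : MeasurePreserving e volume volume :=
      volume_preserving_piFinSuccAbove (fun _ : Fin (n+1) => ℝ) 0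
    set g : ℝ × (Fin n → ℝ) → ℝ := fun z => f (Fin.cons z.1 z.2) with hg
    have hfc : Continuous f := continuous_iff_continuousAt.2 fun x => (hf x).continuousAt
    have hconsc : Continuous (fun z : ℝ × (Fin n → ℝ) => (Fin.cons z.1 z.2 : Fin (n+1) → ℝ)) := by
      apply continuous_pi
      intro i
      induction i using Fin.cases with
      | zero => simpa only [Fin.cons_zero] using continuous_fst
      | succ j => simp only [Fin.cons_succ]; exact (continuous_apply j).comp continuous_snd
    have hgc : Continuous g := hfc.comp hconsc
    have hZ'meas : MeasurableSet {z : ℝ × (Fin n → ℝ) | g z = 0} :=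
      (isClosed_eq hgc continuous_const).measurableSet
    have hslice : ∀ᵐ t : ℝ, volume (Prod.mk t ⁻¹' {z : ℝ × (Fin n → ℝ) | g z = 0}) = 0 := by
      have h1 : volume {t : ℝ | f (Fin.cons t (Fin.tail x0)) = 0} = 0 := by
        apply analytic1d_zero_set_null _ (analytic_cons_right (Fin.tail x0) f hf) (x0 0)
        rw [Fin.cons_self_tail]
        exact hx0
      have h2 : ∀ᵐ t : ℝ, f (Fin.cons t (Fin.tail x0)) ≠ 0 := by
        rw [ae_iff]
        simpa using h1
      filter_upwards [h2] with t ht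
      have : Prod.mk t ⁻¹' {z : ℝ × (Fin n → ℝ) | g z = 0}
          = {y : Fin n → ℝ | f (Fin.cons t y) = 0} := rfl
      rw [this]
      exact ih _ (analytic_cons_left t f hf) ⟨Fin.tail x0, ht⟩
    have hZ' : volume {z : ℝ × (Fin n → ℝ) | g z = 0} = 0 := by
      rw [Measure.volume_eq_prod, Measure.measure_prod_null hZ'meas]
      exact hslice
    have hfeq : {x : Fin (n+1) → ℝ | f x = 0} = e ⁻¹' {z : ℝ × (Fin n → ℝ) | g z = 0} := by
      ext x
      simp only [Set.mem_preimage, Set.mem_setOf_eq, hg]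
      have hx : Fin.cons (e x).1 (e x).2 = x := by
        have h1 : (e x).1 = x 0 := rfl
        have h2 : (e x).2 = Fin.tail x := by
          funext j
          show x (Fin.succAbove 0 j) = x j.succ
          rw [Fin.zero_succAbove]
        rw [h1, h2, Fin.cons_self_tail]
      rw [hx]
    rw [hfeq, he.measure_preimage hZ'meas.nullMeasurableSet]
    exact hZ'


theorem piecewiseSmooth_differentiable_ae {n : ℕ} {ι : Type} [Countable ι]
    (M O : ι → ℕ)
    (p : (i : ι) → Fin (M i) → (Fin n → ℝ) → ℝ)
    (q : (i : ι) → Fin (O i) → (Fin n → ℝ) → ℝ)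
    (h : ι → (Fin n → ℝ) → ℝ)
    (hp : ∀ i j x, AnalyticAt ℝ (p i j) x)
    (hq : ∀ i l x, AnalyticAt ℝ (q i l) x)
    (hh : ∀ i, ContDiff ℝ (⊤ : ℕ∞) (h i))
    (hpart : ∀ x : Fin n → ℝ, ∃! i : ι, (∀ j, 0 ≤ p i j x) ∧ ∀ l, q i l x < 0)
    (P : (Fin n → ℝ) → ℝ)
    (hP : ∀ x, P x = ∑' i : ι, regionInd p q i x * h i x) :
    ∃ A : Set (Fin n → ℝ), MeasurableSet A ∧ volume A = 0 ∧
      ∀ x ∉ A, DifferentiableAt ℝ P x := by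
  classical
  have hpc : ∀ i j, Continuous (p i j) :=
    fun i j => continuous_iff_continuousAt.2 fun x => (hp i j x).continuousAt
  have hqc : ∀ i l, Continuous (q i l) :=
    fun i l => continuous_iff_continuousAt.2 fun x => (hq i l x).continuousAt
  set A : Set (Fin n → ℝ) :=
    ⋃ i, ⋃ j, {x | p i j x = 0 ∧ ∃ y, p i j y ≠ 0} with hA
  have hkey : ∀ (i : ι) (j : Fin (M i)),
      {x : Fin n → ℝ | p i j x = 0 ∧ ∃ y, p i j y ≠ 0} =
        if ∃ y, p i j y ≠ 0 then {x | p i j x = 0} else ∅ := by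
    intro i j
    by_cases hne : ∃ y, p i j y ≠ 0 <;> ext x <;> simp [hne]
  have hmeas : ∀ (i : ι) (j : Fin (M i)),
      MeasurableSet {x : Fin n → ℝ | p i j x = 0 ∧ ∃ y, p i j y ≠ 0} := by
    intro i j
    rw [hkey i j]
    split_ifs
    · exact (isClosed_eq (hpc i j) continuous_const).measurableSet
    · exact MeasurableSet.empty
  refine ⟨A, MeasurableSet.iUnion fun i => MeasurableSet.iUnion fun j => hmeas i j, ?_, ?_⟩
  · refine measure_iUnion_null fun i => measure_iUnion_null fun j => ?_
    rw [hkey i j]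
    split_ifs with hne
    · exact analytic_zero_set_null n (p i j) (hp i j) hne
    · simp
  · intro x hx
    obtain ⟨i, ⟨hip, hiq⟩, -⟩ := hpart x
    have h1 : ∀ j : Fin (M i), ∀ᶠ y in nhds x, 0 ≤ p i j y := by
      intro j
      by_cases hne : ∃ y, p i j y ≠ 0
      · have hpos : 0 < p i j x := by
          rcases lt_or_eq_of_le (hip j) with hlt | heq
          · exact hlt
          · exfalso
            apply hx
            refine Set.mem_iUnion.2 ⟨i, Set.mem_iUnion.2 ⟨j, ?_⟩⟩
            simp only [Set.mem_setOf_eq]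
            exact ⟨heq.symm, hne⟩
        filter_upwards [(hpc i j).continuousAt.preimage_mem_nhds (Ioi_mem_nhds hpos)] with y hy
        exact le_of_lt hy
      · push_neg at hne
        filter_upwards with y
        rw [hne y]
    have h2 : ∀ l : Fin (O i), ∀ᶠ y in nhds x, q i l y < 0 := by
      intro l
      filter_upwards [(hqc i l).continuousAt.preimage_mem_nhds (Iio_mem_nhds (hiq l))] with y hy
      exact hy
    have hPeq : ∀ᶠ y in nhds x, P y = h i y := by
      filter_upwards [Filter.eventually_all.2 h1, Filter.eventually_all.2 h2] with y hy1 hy2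
      rw [hP y]
      have hri : regionInd p q i y = 1 := by
        unfold regionInd
        rw [Finset.prod_eq_one fun j _ => if_pos (hy1 j),
          Finset.prod_eq_one fun l _ => if_pos (hy2 l), one_mul]
      rw [tsum_eq_single i ?_, hri, one_mul]
      intro i' hi'
      obtain ⟨i'', -, huy⟩ := hpart y
      have hii : i = i'' := huy i ⟨hy1, hy2⟩
      have hcond : ¬((∀ j, 0 ≤ p i' j y) ∧ ∀ l, q i' l y < 0) := by
        intro hc
        exact hi' ((huy i' hc).trans hii.symm)
      rw [not_and_or] at hcond
      rcases hcond with hc | hc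
      · push_neg at hc
        obtain ⟨j, hj⟩ := hc
        unfold regionInd
        rw [Finset.prod_eq_zero (Finset.mem_univ j)
          (show (if 0 ≤ p i' j y then (1 : ℝ) else 0) = 0 from if_neg (not_le_of_gt hj)),
          zero_mul, zero_mul]
      · push_neg at hc
        obtain ⟨l, hl⟩ := hc
        unfold regionInd
        rw [Finset.prod_eq_zero (Finset.mem_univ l)
          (show (if q i' l y < 0 then (1 : ℝ) else 0) = 0 from if_neg (not_lt_of_ge hl)),
          mul_zero, zero_mul]
    exact (((hh i).differentiable (by simp)) x).congr_of_eventuallyEq hPeq
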